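/- Rearranged exploration bound: under the hypotheses of the constrained greedy exploration bound and assuming f(S*) > 0, f(S_n) ≥ (1 − e^{-(n−1)ρ/(k−1)}(1 − f({x_1})/f(S*))) · f(S*). -/
import Mathlib

/-- Telescoping bound from submodularity. -/
lemma submod_tele {V : Type*} [DecidableEq V] (f : Finset V → ℝ)
    (hsub : ∀ A B : Finset V, A ⊆ B → ∀ v ∉ B,
      f (insert v A) - f A ≥ f (insert v B) - f B)
    (A : Finset V) (T : Finset V) :
    f (T ∪ A) - f A ≤ ∑ y ∈ T, (f (insert y A) - f A) := by
  induction T using Finset.induction with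
  | empty => simp
  | @insert a T ha ih =>
    rw [Finset.sum_insert ha]
    have hunion : insert a T ∪ A = insert a (T ∪ A) := by
      ext z; simp [Finset.mem_insert, Finset.mem_union, or_assoc]
    rw [hunion]
    by_cases haA : a ∈ A
    · have h1 : insert a (T ∪ A) = T ∪ A := by
        apply Finset.insert_eq_self.mpr; simp [haA]
      have h2 : insert a A = A := Finset.insert_eq_self.mpr haA
      rw [h1, h2]; linarith
    · have haTA : a ∉ T ∪ A := by simp [ha, haA]
      have := hsub A (T ∪ A) (Finset.subset_union_right) a haTA
      linarith

/-- Rearranged constrained greedy exploration bound: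
`f(S_n) ≥ (1 − e^{-(n−1)ρ/(k−1)}(1 − f({x_1})/f(S*))) f(S*)`. -/
theorem constrained_greedy_bound_ratio {V : Type*} [Fintype V] [DecidableEq V]
    (f : Finset V → ℝ)
    (hmono : ∀ A B : Finset V, A ⊆ B → f A ≤ f B)
    (hsub : ∀ A B : Finset V, A ⊆ B → ∀ v ∉ B,
      f (insert v A) - f A ≥ f (insert v B) - f B)
    (hempty : f ∅ = 0)
    (n k : ℕ) (hn : 1 < n) (hk : 1 < k)
    (ρ : ℝ) (hρ : 0 < ρ) (hρ1 : ρ ≤ 1)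
    (x : ℕ → V) (S : ℕ → Finset V)
    (hS : ∀ l, S l = (Finset.range l).image x)
    (Sstar : Finset V) (hcard : Sstar.card = k) (hx1 : x 0 ∈ Sstar)
    (hpos : 0 < f Sstar)
    (hgreedy : ∀ l, 1 ≤ l → l < n → ∀ y : V,
      f (S (l + 1)) - f (S l) ≥ ρ * (f (insert y (S l)) - f (S l))) :
    f (S n) ≥ (1 - Real.exp (-((n : ℝ) - 1) * ρ / ((k : ℝ) - 1)) *
      (1 - f {x 0} / f Sstar)) * f Sstar := by
  have hk1 : (1:ℝ) ≤ (k:ℝ) - 1 := by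
    have : (2:ℝ) ≤ (k:ℝ) := by exact_mod_cast hk
    linarith
  have hk0 : (0:ℝ) < (k:ℝ) - 1 := by linarith
  obtain ⟨c, hc⟩ : ∃ c : ℝ, c = 1 - ρ / ((k:ℝ) - 1) := ⟨_, rfl⟩
  have hc0 : 0 ≤ c := by
    have : ρ / ((k:ℝ) - 1) ≤ 1 := by
      rw [div_le_one hk0]; linarith
    rw [hc]; linarith
  have hx0S : ∀ l, 1 ≤ l → x 0 ∈ S l := by
    intro l hl
    rw [hS l]
    exact Finset.mem_image.mpr ⟨0, Finset.mem_range.mpr hl, rfl⟩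
  -- key contraction step
  have key : ∀ l, 1 ≤ l → l < n →
      f Sstar - f (S (l+1)) ≤ c * (f Sstar - f (S l)) := by
    intro l hl hln
    set T : Finset V := Sstar \ S l with hT
    have hΔ0 : 0 ≤ f (S (l+1)) - f (S l) := by
      have := hgreedy l hl hln (x 0)
      have hx : insert (x 0) (S l) = S l := Finset.insert_eq_self.mpr (hx0S l hl)
      rw [hx] at this; linarith
    have hTcard : (T.card : ℝ) ≤ (k:ℝ) - 1 := by
      have hsubT : T ⊆ Sstar.erase (x 0) := by
        intro z hz
        rw [Finset.mem_sdiff] at hz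
        refine Finset.mem_erase.mpr ⟨?_, hz.1⟩
        rintro rfl; exact hz.2 (hx0S l hl)
      have := Finset.card_le_card hsubT
      rw [Finset.card_erase_of_mem hx1, hcard] at this
      have hk1' : 1 ≤ k := le_of_lt hk
      calc (T.card : ℝ) ≤ ((k - 1 : ℕ) : ℝ) := by exact_mod_cast this
        _ = (k:ℝ) - 1 := by push_cast [Nat.cast_sub hk1']; ring
    have hsum : f Sstar - f (S l) ≤ ∑ y ∈ T, (f (insert y (S l)) - f (S l)) := by
      have h1 := submod_tele f hsub (S l) T
      have h2 : T ∪ S l = Sstar ∪ S l := Finset.sdiff_union_self_eq_union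
      have h3 : f Sstar ≤ f (T ∪ S l) := by
        rw [h2]; exact hmono _ _ Finset.subset_union_left
      linarith
    have hsum2 : ρ * (f Sstar - f (S l)) ≤ (T.card : ℝ) * (f (S (l+1)) - f (S l)) := by
      have h4 : ∑ y ∈ T, ρ * (f (insert y (S l)) - f (S l)) ≤
          ∑ y ∈ T, (f (S (l+1)) - f (S l)) :=
        Finset.sum_le_sum (fun y _ => hgreedy l hl hln y)
      rw [← Finset.mul_sum, Finset.sum_const, nsmul_eq_mul] at h4
      have := mul_le_mul_of_nonneg_left hsum (le_of_lt hρ)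
      linarith
    have hsum3 : ρ * (f Sstar - f (S l)) ≤ ((k:ℝ) - 1) * (f (S (l+1)) - f (S l)) := by
      have := mul_le_mul_of_nonneg_right hTcard hΔ0
      linarith
    have hdiv : ρ * (f Sstar - f (S l)) / ((k:ℝ) - 1) ≤ f (S (l+1)) - f (S l) := by
      rw [div_le_iff₀ hk0]; linarith
    have hcg : c * (f Sstar - f (S l)) =
        (f Sstar - f (S l)) - ρ * (f Sstar - f (S l)) / ((k:ℝ) - 1) := by
      rw [hc]; field_simp
    linarith
  -- iterate
  have iter : ∀ m, 1 + m ≤ n → f Sstar - f (S (1+m)) ≤ c^m * (f Sstar - f (S 1)) := by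
    intro m
    induction m with
    | zero => intro _; simp
    | succ m ih =>
      intro hm
      have h1 := key (1+m) (by omega) (by omega)
      have h2 := ih (by omega)
      have h3 := mul_le_mul_of_nonneg_left h2 hc0
      calc f Sstar - f (S (1+(m+1))) = f Sstar - f (S ((1+m)+1)) := by ring_nf
        _ ≤ c * (f Sstar - f (S (1+m))) := h1
        _ ≤ c * (c^m * (f Sstar - f (S 1))) := h3
        _ = c^(m+1) * (f Sstar - f (S 1)) := by ring
  have hgn : f Sstar - f (S n) ≤ c^(n-1) * (f Sstar - f (S 1)) := by
    have := iter (n-1) (by omega)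
    have hne : 1 + (n-1) = n := by omega
    rwa [hne] at this
  -- S 1 = {x 0}
  have hS1 : f (S 1) = f {x 0} := by
    rw [hS 1]
    norm_num [Finset.range_one]
  have hg1 : 0 ≤ f Sstar - f (S 1) := by
    rw [hS1]
    have : ({x 0} : Finset V) ⊆ Sstar := Finset.singleton_subset_iff.mpr hx1
    linarith [hmono _ _ this]
  -- exponential bound
  obtain ⟨E, hE⟩ : ∃ E : ℝ, E = Real.exp (-((n : ℝ) - 1) * ρ / ((k : ℝ) - 1)) := ⟨_, rfl⟩
  have hcexp : c ≤ Real.exp (-(ρ / ((k:ℝ) - 1))) := by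
    have := Real.add_one_le_exp (-(ρ / ((k:ℝ) - 1)))
    linarith
  have hpow : c^(n-1) ≤ E := by
    calc c^(n-1) ≤ (Real.exp (-(ρ / ((k:ℝ) - 1))))^(n-1) :=
          pow_le_pow_left₀ hc0 hcexp _
      _ = Real.exp (((n-1 : ℕ) : ℝ) * (-(ρ / ((k:ℝ) - 1)))) := by
          rw [← Real.exp_nat_mul]
      _ = E := by
          rw [hE]
          congr 1
          push_cast [Nat.cast_sub (le_of_lt hn)]
          ring
  have hfinal : f Sstar - f (S n) ≤ E * (f Sstar - f (S 1)) := by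
    have := mul_le_mul_of_nonneg_right hpow hg1
    linarith
  have hrw : (1 - E * (1 - f {x 0} / f Sstar)) * f Sstar =
      f Sstar - E * (f Sstar - f {x 0}) := by
    first
      | (field_simp; ring)
      | field_simp
  rw [← hE, hrw]
  rw [hS1] at hfinal
  linarith
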